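/- (Cramér–Rao lower bound, single parameter) If T is an unbiased estimator of θ based on a single observation X with density p_θ, then Var_θ(T) ≥ 1 / I(θ), where I(θ) = E_θ[(∂/∂θ log p_θ(X))²] is the Fisher information, assumed positive. -/
import Mathlib


open MeasureTheory Filter Topology

/-- Cramér–Rao lower bound, single parameter: if `T` is an
unbiased estimator of `θ` based on a single observation with density `p_θ`,
then `Var_θ(T) ≥ 1 / I(θ)` where `I(θ) = E_θ[(∂/∂θ log p_θ(X))²] > 0`. -/
theorem cramer_rao_lower_bound
    (p : ℝ → ℝ → ℝ) (T : ℝ → ℝ) (θ : ℝ) (I : ℝ)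
    (hpos : ∀ t x, 0 < p t x)
    (hnorm : ∀ t, ∫ x, p t x = 1)
    (hdiff : ∀ x, Differentiable ℝ (fun t => p t x))
    (hTmeas : Measurable T)
    (hunbiased : ∀ t, ∫ x, T x * p t x = t)
    (hvar_fin : Integrable (fun x => (T x - θ)^2 * p θ x))
    -- differentiation under the integral sign for ∫ p_θ and ∫ T·p_θ :
    (hDUI₁ : ∫ x, deriv (fun t => p t x) θ = deriv (fun t => ∫ x, p t x) θ)
    (hDUI₂ : ∫ x, T x * deriv (fun t => p t x) θ = deriv (fun t => ∫ x, T x * p t x) θ)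
    (hI : I = ∫ x, (deriv (fun t => Real.log (p t x)) θ)^2 * p θ x)
    (hIpos : 0 < I)
    (hIfin : Integrable (fun x => (deriv (fun t => Real.log (p t x)) θ)^2 * p θ x)) :
    1 / I ≤ ∫ x, (T x - θ)^2 * p θ x := by
  set S : ℝ → ℝ := fun x => deriv (fun t => Real.log (p t x)) θ with hS
  set D : ℝ → ℝ := fun x => deriv (fun t => p t x) θ with hD
  -- score relation
  have hSD : ∀ x, S x * p θ x = D x := by
    intro x
    have h1 : HasDerivAt (fun t => Real.log (p t x)) (D x / p θ x) θ :=
      (hdiff x θ).hasDerivAt.log (hpos θ x).ne'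
    have : S x = D x / p θ x := h1.deriv
    rw [this, div_mul_eq_mul_div, mul_div_assoc, div_self (hpos θ x).ne', mul_one]
  -- integrability of p t for each t
  have hint : ∀ t, Integrable (fun x => p t x) volume := by
    intro t
    by_contra h
    have h1 := hnorm t
    rw [integral_undef h] at h1
    exact one_ne_zero h1.symm
  -- AE strong measurability of D
  have hDmeas : AEStronglyMeasurable D volume := by
    have hu : Tendsto (fun n : ℕ => θ + (1:ℝ)/(n+1)) atTop (𝓝[≠] θ) := by
      apply tendsto_nhdsWithin_of_tendsto_nhds_of_eventually_within
      · have : Tendsto (fun n : ℕ => (1:ℝ)/(n+1)) atTop (𝓝 0) :=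
          tendsto_one_div_add_atTop_nhds_zero_nat
        simpa using tendsto_const_nhds.add this
      · filter_upwards with n
        have : (0:ℝ) < 1/(n+1) := by positivity
        simp [Set.mem_compl_iff]; linarith
    apply aestronglyMeasurable_of_tendsto_ae (f := fun n : ℕ => fun x =>
      slope (fun t => p t x) θ (θ + 1/(n+1))) atTop
    · intro n
      have : (fun x => slope (fun t => p t x) θ (θ + 1/(n+1)))
          = fun x => ((θ + 1/(n+1)) - θ)⁻¹ * (p (θ + 1/(n+1)) x - p θ x) := by
        funext x; simp [slope, smul_eq_mul]
      rw [this]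
      exact (((hint _).sub (hint θ)).aestronglyMeasurable).const_mul _
    · filter_upwards with x
      exact (hasDerivAt_iff_tendsto_slope.1 (hdiff x θ).hasDerivAt).comp hu
  -- integrability of D
  have hDint : Integrable D volume := by
    have hbnd : Integrable (fun x => ((S x)^2 * p θ x + p θ x)/2) volume :=
      (hIfin.add (hint θ)).div_const 2
    refine hbnd.mono' hDmeas ?_
    filter_upwards with x
    have hq := (hpos θ x).le
    have : |D x| = |S x| * p θ x := by
      rw [← hSD x, abs_mul, abs_of_nonneg hq]
    rw [Real.norm_eq_abs, this]
    have h2 : |S x| * 1 ≤ (S x ^ 2 + 1) / 2 := by nlinarith [sq_nonneg (|S x| - 1), sq_abs (S x)]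
    calc |S x| * p θ x ≤ ((S x)^2 + 1)/2 * p θ x := by nlinarith
      _ = ((S x)^2 * p θ x + p θ x) / 2 := by ring
  -- integrability of (T-θ)*D
  have hTD : Integrable (fun x => (T x - θ) * D x) volume := by
    have hbnd : Integrable (fun x => ((T x - θ)^2 * p θ x + (S x)^2 * p θ x)/2) volume :=
      (hvar_fin.add hIfin).div_const 2
    refine hbnd.mono' (((hTmeas.sub measurable_const).aestronglyMeasurable).mul hDmeas) ?_
    filter_upwards with x
    have hq := (hpos θ x).le
    rw [Real.norm_eq_abs, ← hSD x]
    have : |(T x - θ) * (S x * p θ x)| = |T x - θ| * |S x| * p θ x := by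
      rw [abs_mul, abs_mul, abs_of_nonneg hq]; ring
    rw [this]
    nlinarith [sq_nonneg (|T x - θ| - |S x|), sq_abs (T x - θ), sq_abs (S x), sq_nonneg (|T x - θ| - |S x|), mul_nonneg (mul_nonneg (abs_nonneg (T x - θ)) (abs_nonneg (S x))) hq, sq_nonneg (T x - θ), sq_nonneg (S x)]
  -- ∫ D = 0
  have hintD : ∫ x, D x = 0 := by
    rw [hDUI₁]
    have : (fun t => ∫ x, p t x) = fun _ : ℝ => (1:ℝ) := funext hnorm
    rw [this, deriv_const]
  -- ∫ T * D = 1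
  have hintTD : ∫ x, T x * D x = 1 := by
    rw [hDUI₂]
    have : (fun t => ∫ x, T x * p t x) = fun t : ℝ => t := funext hunbiased
    rw [this]; simp
  -- Integrable T*D
  have hTDint : Integrable (fun x => T x * D x) volume := by
    have : (fun x => T x * D x) = fun x => (T x - θ) * D x + θ * D x := by
      funext x; ring
    rw [this]
    exact hTD.add (hDint.const_mul θ)
  -- ∫ (T-θ)*D = 1
  have hcov : ∫ x, (T x - θ) * D x = 1 := by
    have : ∀ x, (T x - θ) * D x = T x * D x - θ * D x := fun x => by ring
    simp_rw [this]
    rw [integral_sub hTDint (hDint.const_mul θ), hintTD, integral_const_mul, hintD]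
    ring
  -- key nonnegativity
  set c := 1 / I with hc
  have hexp : ∀ x, 0 ≤ (T x - θ)^2 * p θ x - 2 * c * ((T x - θ) * D x)
      + c^2 * ((S x)^2 * p θ x) := by
    intro x
    have := hSD x
    have h : (T x - θ)^2 * p θ x - 2 * c * ((T x - θ) * D x) + c^2 * ((S x)^2 * p θ x)
        = ((T x - θ) - c * S x)^2 * p θ x := by rw [← this]; ring
    rw [h]
    exact mul_nonneg (sq_nonneg _) (hpos θ x).le
  have hnn : 0 ≤ ∫ x, ((T x - θ)^2 * p θ x - 2 * c * ((T x - θ) * D x)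
      + c^2 * ((S x)^2 * p θ x)) := integral_nonneg hexp
  have hTD2 : Integrable (fun x => 2 * c * ((T x - θ) * D x)) volume := hTD.const_mul _
  have hIc : Integrable (fun x => c^2 * ((S x)^2 * p θ x)) volume := hIfin.const_mul _
  have hsplit : ∫ x, ((T x - θ)^2 * p θ x - 2 * c * ((T x - θ) * D x)
      + c^2 * ((S x)^2 * p θ x))
      = (∫ x, (T x - θ)^2 * p θ x) - 2 * c + c^2 * I := by
    have hsub : Integrable (fun x => (T x - θ)^2 * p θ x - 2 * c * ((T x - θ) * D x)) volume :=
      hvar_fin.sub hTD2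
    rw [integral_add hsub hIc, integral_sub hvar_fin hTD2,
      integral_const_mul, integral_const_mul, hcov, ← hI]
    ring
  rw [hsplit] at hnn
  have hcc : c^2 * I = c := by rw [pow_two, mul_assoc, hc]; field_simp
  linarith [hnn, hcc]
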